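/- (t-threshold mechanism) Suppose the optimal welfare is normalized so that E[max(v_s, v_b)] = 1, let r = E[v_s] with r > 0, and let t > 1 satisfy t < (1−r)/(2r). Then the fixed-price mechanism with trade price t·r satisfies E[W_{t·r}] ≥ 1 + r − 1/t + r/t − t·r. -/

import Mathlib

/-!
Trading at price `p` never lowers welfare below `v_s`, and gains at least `(v_b - p)⁺` on the
event `v_s ≤ p`; by independence this gives `E[W_p] ≥ E[v_s] + P(v_s ≤ p) · E[(v_b - p)⁺]`.
With `p = t·r`, Markov's inequality gives `P(v_s ≤ p) ≥ 1 - 1/t`, and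
`(v_b - p)⁺ ≥ max(v_s, v_b) - v_s - p` gives `E[(v_b - p)⁺] ≥ 1 - r - p ≥ 0`.
-/

open MeasureTheory ProbabilityTheory Set

/-- `W_p` at seller value `s` and buyer value `b`. -/
noncomputable def fixedPriceWelfare (p s b : ℝ) : ℝ :=
  if s ≤ p ∧ p ≤ b then b else s

lemma measurable_fixedPriceWelfare (p : ℝ) :
    Measurable fun z : ℝ × ℝ => fixedPriceWelfare p z.1 z.2 :=
  Measurable.ite ((measurableSet_le measurable_fst measurable_const).inter
    (measurableSet_le measurable_const measurable_snd)) measurable_snd measurable_fst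

lemma abs_fixedPriceWelfare_le (p s b : ℝ) : |fixedPriceWelfare p s b| ≤ |s| + |b| := by
  unfold fixedPriceWelfare
  split_ifs <;> linarith [abs_nonneg s, abs_nonneg b]

lemma add_indicator_mul_le_fixedPriceWelfare (p s b : ℝ) :
    s + (Iic p).indicator 1 s * max (b - p) 0 ≤ fixedPriceWelfare p s b := by
  unfold fixedPriceWelfare
  by_cases hs : s ≤ p
  · rw [indicator_of_mem (show s ∈ Iic p from hs), Pi.one_apply, one_mul]
    by_cases hb : p ≤ b
    · rw [if_pos ⟨hs, hb⟩, max_eq_left (sub_nonneg.2 hb)]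
      linarith
    · rw [if_neg fun h => hb h.2, max_eq_right (by linarith), add_zero]
  · rw [indicator_of_notMem (show s ∉ Iic p from hs), zero_mul, add_zero, if_neg fun h => hs h.1]

lemma one_sub_div_le_indicator_Iic {x p : ℝ} (hx : 0 ≤ x) (hp : 0 < p) :
    1 - x / p ≤ (Iic p).indicator 1 x := by
  by_cases hxp : x ≤ p
  · rw [indicator_of_mem (show x ∈ Iic p from hxp), Pi.one_apply]
    linarith [div_nonneg hx hp.le]
  · rw [indicator_of_notMem (show x ∉ Iic p from hxp), sub_nonpos, one_le_div hp]
    exact (not_le.1 hxp).le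

lemma max_sub_sub_le_max_sub_zero {a b p : ℝ} (ha : 0 ≤ a) (hp : 0 ≤ p) :
    max a b - a - p ≤ max (b - p) 0 := by
  rcases le_total a b with hab | hab
  · rw [max_eq_right hab]
    linarith [le_max_left (b - p) 0]
  · rw [max_eq_left hab]
    linarith [le_max_right (b - p) 0]

section Integrals

variable {Ω : Type*} [MeasurableSpace Ω] {μ : Measure Ω} {X Y : Ω → ℝ}

lemma integrable_fixedPriceWelfare (hX : Integrable X μ) (hY : Integrable Y μ) (p : ℝ) :
    Integrable (fun ω => fixedPriceWelfare p (X ω) (Y ω)) μ := by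
  refine Integrable.mono' (hX.abs.add hY.abs) ?_ (ae_of_all _ fun ω => ?_)
  · exact ((measurable_fixedPriceWelfare p).comp_aemeasurable
      (hX.aemeasurable.prodMk hY.aemeasurable)).aestronglyMeasurable
  · rw [Real.norm_eq_abs]
    exact abs_fixedPriceWelfare_le p (X ω) (Y ω)

lemma integrable_indicator_Iic_comp [IsFiniteMeasure μ] (hX : AEMeasurable X μ) (p : ℝ) :
    Integrable (fun ω => (Iic p).indicator (1 : ℝ → ℝ) (X ω)) μ := by
  refine Integrable.mono' (integrable_const 1) ?_ (ae_of_all _ fun ω => ?_)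
  · exact ((measurable_const.indicator measurableSet_Iic).comp_aemeasurable
      hX).aestronglyMeasurable
  · by_cases h : X ω ≤ p <;> simp [indicator_of_mem, indicator_of_notMem, h]

lemma ProbabilityTheory.IndepFun.integral_add_mul_le_integral_fixedPriceWelfare
    [IsFiniteMeasure μ] (hXY : IndepFun X Y μ) (hX : Integrable X μ) (hY : Integrable Y μ) (p : ℝ) :
    (∫ ω, X ω ∂μ) + (∫ ω, (Iic p).indicator 1 (X ω) ∂μ) * ∫ ω, max (Y ω - p) 0 ∂μ
      ≤ ∫ ω, fixedPriceWelfare p (X ω) (Y ω) ∂μ := by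
  have hφ : Measurable ((Iic p).indicator (1 : ℝ → ℝ)) :=
    measurable_const.indicator measurableSet_Iic
  have hψ : Measurable fun y : ℝ => max (y - p) 0 := by fun_prop
  have hprod : Integrable (fun ω => (Iic p).indicator 1 (X ω) * max (Y ω - p) 0) μ :=
    (hXY.comp hφ hψ).integrable_mul (integrable_indicator_Iic_comp hX.aemeasurable p)
      (hY.sub (integrable_const p)).pos_part
  rw [← hXY.integral_fun_comp_mul_comp hX.aemeasurable hY.aemeasurable
    hφ.aestronglyMeasurable hψ.aestronglyMeasurable, ← integral_add hX hprod]
  exact integral_mono (hX.add hprod) (integrable_fixedPriceWelfare hX hY p)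
    fun ω => add_indicator_mul_le_fixedPriceWelfare p (X ω) (Y ω)

variable [IsProbabilityMeasure μ]

lemma one_sub_integral_div_le_integral_indicator_Iic (hX0 : ∀ ω, 0 ≤ X ω)
    (hX : Integrable X μ) {p : ℝ} (hp : 0 < p) :
    1 - (∫ ω, X ω ∂μ) / p ≤ ∫ ω, (Iic p).indicator 1 (X ω) ∂μ := by
  have hmono : ∫ ω, (1 - X ω / p) ∂μ ≤ ∫ ω, (Iic p).indicator 1 (X ω) ∂μ :=
    integral_mono ((integrable_const 1).sub (hX.div_const p))
      (integrable_indicator_Iic_comp hX.aemeasurable p)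
      fun ω => one_sub_div_le_indicator_Iic (hX0 ω) hp
  rwa [integral_sub (integrable_const 1) (hX.div_const p), integral_div, integral_const,
    probReal_univ, one_smul] at hmono

lemma integral_max_sub_integral_sub_le (hX0 : ∀ ω, 0 ≤ X ω) (hX : Integrable X μ)
    (hY : Integrable Y μ) {p : ℝ} (hp : 0 ≤ p) :
    (∫ ω, max (X ω) (Y ω) ∂μ) - (∫ ω, X ω ∂μ) - p ≤ ∫ ω, max (Y ω - p) 0 ∂μ := by
  have hmax : Integrable (fun ω => max (X ω) (Y ω)) μ := hX.sup hY
  have hgain : Integrable (fun ω => max (X ω) (Y ω) - X ω) μ := hmax.sub hX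
  have hmono : ∫ ω, (max (X ω) (Y ω) - X ω - p) ∂μ ≤ ∫ ω, max (Y ω - p) 0 ∂μ :=
    integral_mono (hgain.sub (integrable_const p)) (hY.sub (integrable_const p)).pos_part
      fun ω => max_sub_sub_le_max_sub_zero (hX0 ω) hp
  rwa [integral_sub hgain (integrable_const p), integral_sub hmax hX, integral_const,
    probReal_univ, one_smul] at hmono

end Integrals

theorem t_threshold_mechanism_welfare_general
    {Ω : Type*} [MeasurableSpace Ω] (μ : Measure Ω) [IsProbabilityMeasure μ]
    (vs vb : Ω → ℝ)
    (hindep : IndepFun vs vb μ)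
    (hs_nonneg : ∀ ω, 0 ≤ vs ω)
    (hs_int : Integrable vs μ) (hb_int : Integrable vb μ)
    (hopt : ∫ ω, max (vs ω) (vb ω) ∂μ = 1)
    (r t : ℝ) (hr : r = ∫ ω, vs ω ∂μ) (hr_pos : 0 < r)
    (ht_one : 1 < t) (ht : t < (1 - r) / (2 * r)) :
    1 + r - 1 / t + r / t - t * r
      ≤ ∫ ω, (if vs ω ≤ t * r ∧ t * r ≤ vb ω then vb ω else vs ω) ∂μ := by
  have ht_pos : 0 < t := one_pos.trans ht_one
  have hp : 0 < t * r := mul_pos ht_pos hr_pos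
  have hsell := one_sub_integral_div_le_integral_indicator_Iic hs_nonneg hs_int hp
  have hbuy := integral_max_sub_integral_sub_le hs_nonneg hs_int hb_int hp.le
  rw [← hr, div_mul_cancel_right₀ hr_pos.ne'] at hsell
  rw [hopt, ← hr] at hbuy
  have hsell_nonneg : 0 ≤ 1 - t⁻¹ := sub_nonneg.2 (inv_le_one_of_one_le₀ ht_one.le)
  have hbuy_nonneg : 0 ≤ 1 - r - t * r := by
    rw [lt_div_iff₀ (by positivity)] at ht
    nlinarith
  calc 1 + r - 1 / t + r / t - t * r = r + (1 - t⁻¹) * (1 - r - t * r) := by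
        field_simp; ring
    _ ≤ r + (∫ ω, (Iic (t * r)).indicator 1 (vs ω) ∂μ) * ∫ ω, max (vb ω - t * r) 0 ∂μ := by
        gcongr
        exact hsell_nonneg.trans hsell
    _ ≤ _ := hr ▸ hindep.integral_add_mul_le_integral_fixedPriceWelfare hs_int hb_int (t * r)

/-- The `t`-threshold mechanism: if the optimal expected welfare is normalized to `1`,
`r = E[v_s] > 0` and `1 < t < (1 - r)/(2r)`, then the fixed-price mechanism with trade
price `t·r` has expected welfare at least `1 + r - 1/t + r/t - t·r`. -/
theorem t_threshold_mechanism_welfare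
    {Ω : Type*} [MeasurableSpace Ω] (μ : Measure Ω) [IsProbabilityMeasure μ]
    (vs vb : Ω → ℝ)
    (hmeas_s : Measurable vs) (hmeas_b : Measurable vb)
    (hindep : IndepFun vs vb μ)
    (hs_nonneg : ∀ ω, 0 ≤ vs ω) (hb_nonneg : ∀ ω, 0 ≤ vb ω)
    (hs_int : Integrable vs μ) (hb_int : Integrable vb μ)
    (hopt : ∫ ω, max (vs ω) (vb ω) ∂μ = 1)
    (r t : ℝ) (hr : r = ∫ ω, vs ω ∂μ) (hr_pos : 0 < r)
    (ht_one : 1 < t) (ht : t < (1 - r) / (2 * r)) :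
    1 + r - 1 / t + r / t - t * r
      ≤ ∫ ω, (if vs ω ≤ t * r ∧ t * r ≤ vb ω then vb ω else vs ω) ∂μ :=
  t_threshold_mechanism_welfare_general μ vs vb hindep hs_nonneg hs_int hb_int hopt r t hr hr_pos
    ht_one ht
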